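/- Let 1 ≤ a_1 ≤ a_2 ≤ … ≤ a_m be a weakly increasing sequence of positive integers. The strongly stable ideal ⟨x_{a_1}x_{a_2}⋯x_{a_m}⟩ with the single strongly stable generator x_{a_1}⋯x_{a_m} is dualizable, and its dual strongly stable ideal is ⟨x_1^{a_1}, x_2^{a_2}, …, x_m^{a_m}⟩, the strongly stable ideal generated by x_1^{a_1}, …, x_m^{a_m}. -/

import Mathlib

/-!
Encoding conventions (used throughout):
* The paper's positive integers `ℕ = {1,2,…}` are encoded by Lean's `ℕ = {0,1,2,…}`
  via the order isomorphism `n ↦ n - 1`, in both the domain and the finite part of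
  the codomain `ℕ̂ = ℕ ∪ {∞}`, the latter encoded as `ℕ∞`.  Under this shift the
  duality `D` is given by the same formula `Df(p) = min { q | f(q) > p }`.
* Variables `x_1, x_2, …` are indexed by Lean's `0, 1, 2, …`; monomials are
  finitely supported functions `ℕ → ℕ` (exponent vectors); exponents are unshifted.
-/

noncomputable section

/-- Maps `ℕ → ℕ̂`. -/
abbrev NNhat := ℕ → ℕ∞

/-- SmallMap maps: all values bounded by some natural number. -/
def SmallMap (f : NNhat) : Prop := ∃ N : ℕ, ∀ n, f n ≤ (N : ℕ∞)

/-- LargeMap maps: some value equals `∞`. -/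
def LargeMap (f : NNhat) : Prop := ∃ n, f n = ⊤

/-- Maps with all values finite and unbounded image. -/
def UnbFinMap (f : NNhat) : Prop := (∀ n, f n ≠ ⊤) ∧ ∀ N : ℕ, ∃ n, (N : ℕ∞) < f n

/-- The duality `D`: `Df(p) = min { q : f(q) > p }`, the min of the empty set being `∞`. -/
def Ddual (f : NNhat) : NNhat := fun p =>
  sInf ((fun q : ℕ => (q : ℕ∞)) '' {q : ℕ | (p : ℕ∞) < f q})

/-- The poset `Hom(ℕ, ℕ̂)` of monotone maps, ordered pointwise. -/
abbrev HomNN := {f : NNhat // Monotone f}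

/-- The topology on `Hom(ℕ, ℕ̂)` with basis the intervals `U(f̲, f̄)` with `f̲` small
and `f̄` large. -/
instance (priority := 10000) : TopologicalSpace HomNN :=
  TopologicalSpace.generateFrom
    {S | ∃ a b : HomNN, SmallMap a.1 ∧ LargeMap b.1 ∧ S = {f : HomNN | a ≤ f ∧ f ≤ b}}

/-- Monomials: finitely supported functions `ℕ → ℕ` (exponent vectors). -/
def Mon : Set (ℕ → ℕ) := {u | (Function.support u).Finite}

/-- `Γ f = ∏_{f(i) < ∞} x_{f(i)}` : the exponent of `x_j` is `#{i | f(i) = j}`. -/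
def Gmap (f : NNhat) : ℕ → ℕ := fun j => Nat.card {i : ℕ // f i = (j : ℕ∞)}

/-- `Λ f = ∏_{i ≥ 1} x_i^{f(i) - f(i-1)}` (with the convention `f(0) = 1`, i.e. the
shifted convention `f(-1) = 0`). -/
def Lmap (f : NNhat) : ℕ → ℕ := fun i =>
  match i with
  | 0 => (f 0).toNat
  | k + 1 => (f (k + 1)).toNat - (f k).toNat

/-- The exponent vector of the variable `x_i`. -/
def xvar (i : ℕ) : ℕ → ℕ := fun k => if k = i then 1 else 0

/-- One generating step of the strongly stable order: `stStep a b` means `a ≥_st b`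
by one of the defining relations `x_i·w ≥_st x_j·w` (`i ≤ j`) or `x_i·b ≥_st b`. -/
def stStep (a b : ℕ → ℕ) : Prop :=
  (∃ i j w, i ≤ j ∧ a = w + xvar i ∧ b = w + xvar j) ∨ (∃ i, a = b + xvar i)

/-- The strongly stable order: `stGE u v` means `u ≥_st v`. -/
def stGE (u v : ℕ → ℕ) : Prop := Relation.ReflTransGen stStep u v

/-- A strongly stable ideal: a set of monomials upward closed under `≥_st`. -/
def IsSStableIdeal (I : Set (ℕ → ℕ)) : Prop :=
  I ⊆ Mon ∧ ∀ u ∈ I, ∀ v, stGE v u → v ∈ I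

/-- The smallest strongly stable ideal containing the set `G` of monomials. -/
def sstSpan (G : Set (ℕ → ℕ)) : Set (ℕ → ℕ) := {v | ∃ u ∈ G, stGE v u}

/-- `Γ(ℐ^L)`: the set of monomials `Γ f` for `f` large in `ℐ`. -/
def GammaIdeal (ℐ : Set HomNN) : Set (ℕ → ℕ) :=
  {u | ∃ f ∈ ℐ, LargeMap f.1 ∧ u = Gmap f.1}

/-- `Λ(ℱ_S)`: the set of monomials `Λ f` for `f` small in `ℱ`. -/
def LambdaIdeal (ℱ : Set HomNN) : Set (ℕ → ℕ) :=
  {u | ∃ f ∈ ℱ, SmallMap f.1 ∧ u = Lmap f.1}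

/-- `I` is a dualizable strongly stable ideal with dual strongly stable ideal `J`:
the open poset ideal `ℐ` corresponding to `I` is regular open, and `J` is obtained
from the interior `ℱ` of the complement of `ℐ` as `Λ(ℱ_S)`. -/
def IsDualPair (I J : Set (ℕ → ℕ)) : Prop :=
  ∃ ℐ : Set HomNN, IsOpen ℐ ∧ IsLowerSet ℐ ∧ ℐ = interior (closure ℐ) ∧
    GammaIdeal ℐ = I ∧ LambdaIdeal (interior ℐᶜ) = J

/-- Strict lexicographic order `f ≻_lex g`: at the least index where they differ,
`f` is larger. -/
def lexGT (f g : NNhat) : Prop := ∃ r, (∀ i < r, f i = g i) ∧ g r < f r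

/-- `f ⪰_lex g`. -/
def lexGE (f g : NNhat) : Prop := f = g ∨ lexGT f g

/-- The single monomial `x_{i+1}^e` (Lean variable index `i`). -/
def singleMon (i e : ℕ) : ℕ → ℕ := fun j => if j = i then e else 0

end

noncomputable section

def Psum (v : ℕ → ℕ) (t : ℕ) : ℕ := ∑ j ∈ Finset.range t, v j

lemma Psum_mono (v : ℕ → ℕ) : Monotone (Psum v) := by
  intro s t h
  exact Finset.sum_le_sum_of_subset (Finset.range_subset_range.2 h)

lemma Psum_succ (v : ℕ → ℕ) (t : ℕ) : Psum v (t + 1) = Psum v t + v t :=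
  Finset.sum_range_succ v t

lemma Psum_add (v w : ℕ → ℕ) (t : ℕ) : Psum (v + w) t = Psum v t + Psum w t := by
  simp [Psum, Finset.sum_add_distrib]

lemma Psum_xvar (i t : ℕ) : Psum (xvar i) t = if i < t then 1 else 0 := by
  simp [Psum, xvar, Finset.sum_ite_eq', Finset.mem_range]

lemma Psum_single (i e t : ℕ) : Psum (singleMon i e) t = if i < t then e else 0 := by
  simp [Psum, singleMon, Finset.sum_ite_eq', Finset.mem_range]

lemma Psum_stab (v : ℕ → ℕ) (N : ℕ) (hv : ∀ j, N ≤ j → v j = 0) :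
    ∀ t, N ≤ t → Psum v t = Psum v N := by
  intro t ht
  induction t with
  | zero => rw [Nat.le_zero.1 ht]
  | succ k ih =>
    rcases Nat.lt_or_ge k N with h | h
    · have : N = k + 1 := by omega
      rw [this]
    · rw [Psum_succ, hv k h, ih h]; omega

lemma Psum_le_stab (v : ℕ → ℕ) (N : ℕ) (hv : ∀ j, N ≤ j → v j = 0) (t : ℕ) :
    Psum v t ≤ Psum v N := by
  rcases le_or_gt t N with h | h
  · exact Psum_mono v h
  · rw [Psum_stab v N hv t h.le]

lemma dom_of_step {a b : ℕ → ℕ} (h : stStep a b) : ∀ t, Psum b t ≤ Psum a t := by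
  intro t
  rcases h with ⟨i, j, w, hij, rfl, rfl⟩ | ⟨i, rfl⟩
  · rw [Psum_add, Psum_add, Psum_xvar, Psum_xvar]
    have : (if j < t then 1 else 0) ≤ (if i < t then 1 else 0) := by
      split <;> split <;> omega
    omega
  · rw [Psum_add]; omega

lemma dom_of_stGE {v u : ℕ → ℕ} (h : stGE v u) : ∀ t, Psum u t ≤ Psum v t := by
  induction h using Relation.ReflTransGen.head_induction_on with
  | refl => exact fun t => le_rfl
  | head hstep _ ih => exact fun t => (ih t).trans (dom_of_step hstep t)

lemma mon_of_step {a b : ℕ → ℕ} (h : stStep a b) (hb : b ∈ Mon) : a ∈ Mon := by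
  rcases h with ⟨i, j, w, _, rfl, rfl⟩ | ⟨i, rfl⟩
  · have hw : (Function.support w).Finite := by
      apply hb.subset
      intro k hk
      simp only [Function.mem_support, Pi.add_apply] at *
      omega
    exact (hw.union (Set.finite_singleton i)).subset (by
      intro k hk
      simp only [Function.mem_support, Pi.add_apply, xvar] at hk
      by_cases h : k = i <;> simp_all)
  · exact (hb.union (Set.finite_singleton i)).subset (by
      intro k hk
      simp only [Function.mem_support, Pi.add_apply, xvar] at hk
      by_cases h : k = i <;> simp_all [Mon, Function.mem_support])

lemma mon_of_stGE {v u : ℕ → ℕ} (h : stGE v u) (hu : u ∈ Mon) : v ∈ Mon := by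
  induction h using Relation.ReflTransGen.head_induction_on with
  | refl => exact hu
  | head hstep _ ih => exact mon_of_step hstep ih

lemma eq_of_psum_eq {u v : ℕ → ℕ} (h : ∀ t, Psum v t = Psum u t) : v = u := by
  funext j
  have h1 := h j
  have h2 := h (j + 1)
  rw [Psum_succ, Psum_succ] at h2
  omega

lemma stGE_of_dom (u : ℕ → ℕ) (N : ℕ) (hu : ∀ j, N ≤ j → u j = 0) :
    ∀ μ : ℕ, ∀ v : ℕ → ℕ, (∀ j, N ≤ j → v j = 0) →
      (∀ t, Psum u t ≤ Psum v t) →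
      (∑ t ∈ Finset.range (N + 1), (Psum v t - Psum u t)) = μ → stGE v u := by
  intro μ
  induction μ using Nat.strong_induction_on with
  | _ μ ih =>
    intro v hv hd hμ
    by_cases hvu : v = u
    · exact hvu ▸ Relation.ReflTransGen.refl
    · have hne : ∃ t, Psum u t < Psum v t := by
        by_contra hco
        push_neg at hco
        exact hvu (eq_of_psum_eq fun t => le_antisymm (hco t) (hd t))
      rcases lt_or_eq_of_le (hd N) with hdeg | hdeg
      · -- degree drop: remove the largest variable of v
        have hex : ∃ j, j ≤ N ∧ v j ≠ 0 := by
          by_contra hco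
          push_neg at hco
          have : Psum v N = 0 := by
            apply Finset.sum_eq_zero
            intro j hj
            exact hco j (Finset.mem_range.1 hj).le
          omega
        obtain ⟨j0, hj0N, hj0⟩ := hex
        set M := Nat.findGreatest (fun j => v j ≠ 0) N with hM
        have hvM : v M ≠ 0 := Nat.findGreatest_spec (P := fun j => v j ≠ 0) hj0N hj0
        have hMN : M ≤ N := Nat.findGreatest_le N
        have hMltN : M < N := lt_of_le_of_ne hMN (by intro h; exact hvM (h ▸ hv N le_rfl))
        have hgt : ∀ j, M < j → v j = 0 := by
          intro j hj
          rcases le_or_gt j N with h | h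
          · by_contra hne'
            exact Nat.findGreatest_is_greatest hj h hne'
          · exact hv j h.le
        set v' : ℕ → ℕ := fun j => if j = M then v M - 1 else v j with hv'
        have hvsum : v = v' + xvar M := by
          funext k
          simp only [Pi.add_apply, hv', xvar]
          by_cases h : k = M <;> simp [h] <;> omega
        have hstep : stStep v v' := Or.inr ⟨M, hvsum⟩
        have hPv' : ∀ t, Psum v t = Psum v' t + (if M < t then 1 else 0) := by
          intro t; rw [hvsum, Psum_add, Psum_xvar]
        have hv'supp : ∀ j, N ≤ j → v' j = 0 := by
          intro j hj
          simp only [hv']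
          rw [if_neg (by omega)]
          exact hv j hj
        have hstabv : ∀ t, M < t → Psum v t = Psum v N := by
          intro t ht
          have h1 := Psum_stab v (M+1) (fun j hj => hgt j (by omega)) t ht
          have h2 := Psum_stab v (M+1) (fun j hj => hgt j (by omega)) N hMltN
          rw [h1, h2]
        have hdom' : ∀ t, Psum u t ≤ Psum v' t := by
          intro t
          have := hPv' t
          have hdt := hd t
          rcases le_or_gt t M with h | h
          · rw [if_neg (by omega)] at this; omega
          · have h1 := hstabv t h
            have h2 := Psum_le_stab u N hu t
            rw [if_pos h] at this
            omega
        have hlt : (∑ t ∈ Finset.range (N + 1), (Psum v' t - Psum u t)) < μ := by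
          rw [← hμ]
          apply Finset.sum_lt_sum
          · intro t _
            have h2 : Psum v' t ≤ Psum v t := by
              have := hPv' t; split at this <;> omega
            exact Nat.sub_le_sub_right h2 _
          · refine ⟨N, Finset.mem_range.2 (by omega), ?_⟩
            have := hPv' N
            rw [if_pos hMltN] at this
            have := hdom' N
            omega
        exact Relation.ReflTransGen.head hstep (ih _ hlt v' hv'supp hdom' rfl)
      · -- equal degree: swap a variable rightwards
        have hex0 : ∃ t, Psum u t < Psum v t := hne
        set t0 := Nat.find hex0 with ht0def
        have ht0 : Psum u t0 < Psum v t0 := Nat.find_spec hex0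
        have ht0min : ∀ t, t < t0 → Psum v t = Psum u t := by
          intro t ht
          exact le_antisymm (by by_contra h; exact (Nat.find_min hex0 ht) (by omega)) (hd t)
        have ht0pos : 0 < t0 := by
          rcases Nat.eq_zero_or_pos t0 with h | h
          · exfalso; rw [h] at ht0; simp [Psum] at ht0
          · exact h
        have ht0N : t0 < N := by
          by_contra h
          push_neg at h
          have h1 := Psum_stab v N hv t0 h
          have h2 := Psum_stab u N hu t0 h
          omega
        have hexs : ∃ s, t0 < s ∧ Psum v s ≤ Psum u s := ⟨N, ht0N, hdeg.ge⟩
        set s := Nat.find hexs with hsdef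
        obtain ⟨hts, hvs⟩ := Nat.find_spec hexs
        have hsN : s ≤ N := Nat.find_le ⟨ht0N, hdeg.ge⟩
        have hmid : ∀ t, t0 ≤ t → t < s → Psum u t < Psum v t := by
          intro t h1 h2
          rcases eq_or_lt_of_le h1 with rfl | h1'
          · exact ht0
          · have := Nat.find_min hexs h2
            push_neg at this
            exact this h1'
        have hvt0 : 0 < v (t0 - 1) := by
          have h1 : Psum v t0 = Psum v (t0 - 1) + v (t0 - 1) := by
            rw [← Psum_succ]; congr 1; omega
          have h2 := ht0min (t0 - 1) (by omega)
          have h3 : Psum u (t0 - 1) ≤ Psum u t0 := Psum_mono u (by omega)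
          omega
        set w : ℕ → ℕ := fun k => if k = t0 - 1 then v k - 1 else v k with hw
        have hvw : v = w + xvar (t0 - 1) := by
          funext k
          simp only [Pi.add_apply, hw, xvar]
          by_cases h : k = t0 - 1 <;> simp [h] <;> omega
        set v' : ℕ → ℕ := w + xvar (s - 1) with hv'
        have hstep : stStep v v' := Or.inl ⟨t0 - 1, s - 1, w, by omega, hvw, rfl⟩
        have hPv : ∀ t, Psum v t = Psum w t + (if t0 - 1 < t then 1 else 0) := by
          intro t; rw [hvw, Psum_add, Psum_xvar]
        have hPv' : ∀ t, Psum v' t = Psum w t + (if s - 1 < t then 1 else 0) := by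
          intro t; rw [hv', Psum_add, Psum_xvar]
        have hle : ∀ t, Psum v' t ≤ Psum v t := by
          intro t
          have h1 := hPv t; have h2 := hPv' t
          have : (if s - 1 < t then 1 else 0) ≤ (if t0 - 1 < t then (1:ℕ) else 0) := by
            split <;> split <;> omega
          omega
        have hdom' : ∀ t, Psum u t ≤ Psum v' t := by
          intro t
          have h1 := hPv t; have h2 := hPv' t
          rcases lt_or_ge t t0 with h | h
          · have : ¬ (t0 - 1 < t) := by omega
            have : ¬ (s - 1 < t) := by omega
            have := hd t
            simp only [if_neg ‹¬ (t0 - 1 < t)›] at h1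
            simp only [if_neg ‹¬ (s - 1 < t)›] at h2
            omega
          · rcases lt_or_ge t s with h' | h'
            · have hm := hmid t h h'
              have : (if s - 1 < t then (1:ℕ) else 0) ≤ 1 := by split <;> omega
              have htt : t0 - 1 < t := by omega
              rw [if_pos htt] at h1
              omega
            · have htt : t0 - 1 < t := by omega
              have hst : s - 1 < t := by omega
              rw [if_pos htt] at h1
              rw [if_pos hst] at h2
              have := hd t
              omega
        have hv'supp : ∀ j, N ≤ j → v' j = 0 := by
          intro j hj
          simp only [hv', hw, Pi.add_apply, xvar]
          rw [if_neg (by omega), if_neg (by omega)]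
          exact hv j hj
        have hlt : (∑ t ∈ Finset.range (N + 1), (Psum v' t - Psum u t)) < μ := by
          rw [← hμ]
          apply Finset.sum_lt_sum
          · intro t _
            exact Nat.sub_le_sub_right (hle t) _
          · refine ⟨t0, Finset.mem_range.2 (by omega), ?_⟩
            have h1 := hPv t0; have h2 := hPv' t0
            rw [if_pos (by omega)] at h1
            rw [if_neg (by omega)] at h2
            have := hdom' t0
            omega
        exact Relation.ReflTransGen.head hstep (ih _ hlt v' hv'supp hdom' rfl)

section GammaPart
open Finset

variable {m : ℕ} {a : Fin m → ℕ}

/-- The generator monomial as exponent vector. -/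
def ugen (m : ℕ) (a : Fin m → ℕ) : ℕ → ℕ := fun j => Nat.card {i : Fin m // a i = j + 1}

lemma ugen_eq_card (j : ℕ) :
    ugen m a j = (Finset.univ.filter fun i : Fin m => a i = j + 1).card := by
  rw [ugen, Nat.card_eq_fintype_card, Fintype.card_subtype]

lemma Psum_ugen (hpos : ∀ i, 1 ≤ a i) (t : ℕ) :
    Psum (ugen m a) t = (Finset.univ.filter fun i : Fin m => a i ≤ t).card := by
  rw [Finset.card_eq_sum_card_fiberwise
    (f := fun i => a i - 1) (t := Finset.range t)
    (fun i hi => by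
      simp only [Finset.mem_coe, Finset.mem_filter] at hi
      have := hpos i
      simp only [Finset.mem_coe, Finset.mem_range]
      omega)]
  apply Finset.sum_congr rfl
  intro j hj
  rw [ugen_eq_card, Finset.filter_filter]
  congr 1
  apply Finset.filter_congr
  intro i _
  have := hpos i
  simp only [Finset.mem_range] at hj
  constructor
  · intro h; omega
  · intro h; omega

lemma Psum_ugen_full (hpos : ∀ i, 1 ≤ a i) {t : ℕ} (ht : ∀ i, a i ≤ t) :
    Psum (ugen m a) t = m := by
  rw [Psum_ugen hpos, Finset.filter_true_of_mem (fun i _ => ht i)]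
  simp

lemma Psum_ugen_lb (hpos : ∀ i, 1 ≤ a i) (hmono : Monotone a) (i : Fin m) :
    (i : ℕ) < Psum (ugen m a) (a i) := by
  rw [Psum_ugen hpos]
  have hsub : Finset.Iic i ⊆ Finset.univ.filter fun i' : Fin m => a i' ≤ a i := by
    intro k hk
    simp only [Finset.mem_Iic] at hk
    simp only [Finset.mem_filter, Finset.mem_univ, true_and]
    exact hmono hk
  have := Finset.card_le_card hsub
  rw [Fin.card_Iic] at this
  omega

lemma ugen_supp (j : ℕ) (hj : Finset.univ.sup a ≤ j) : ugen m a j = 0 := by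
  rw [ugen_eq_card, Finset.card_eq_zero, Finset.filter_eq_empty_iff]
  intro i _
  have : a i ≤ Finset.univ.sup a := Finset.le_sup (Finset.mem_univ i)
  omega

end GammaPart

def cIdeal (m : ℕ) (a : Fin m → ℕ) : Set HomNN :=
  {f | ∀ i : Fin m, f.1 (i : ℕ) < (a i : ℕ∞)}

lemma basic_open {S : Set HomNN} (h : ∃ a b : HomNN, SmallMap a.1 ∧ LargeMap b.1 ∧
    S = {f : HomNN | a ≤ f ∧ f ≤ b}) : IsOpen S :=
  TopologicalSpace.GenerateOpen.basic S h

lemma cIdeal_isOpen (m : ℕ) (hm : 0 < m) (a : Fin m → ℕ) : IsOpen (cIdeal m a) := by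
  rw [isOpen_iff_forall_mem_open]
  intro f hf
  set fbar : NNhat := fun i => if i < m then f.1 i else ⊤ with hfbar
  have hmono : Monotone fbar := by
    intro i j hij
    simp only [hfbar]
    split <;> split
    · exact f.2 hij
    · exact le_top
    · omega
    · exact le_rfl
  set bot : HomNN := ⟨fun _ => 0, monotone_const⟩ with hbot
  refine ⟨{g : HomNN | bot ≤ g ∧ g ≤ ⟨fbar, hmono⟩}, ?_, ?_, ?_⟩
  · intro g hg i
    calc g.1 (i : ℕ) ≤ fbar (i : ℕ) := hg.2 (i : ℕ)
    _ = f.1 (i : ℕ) := by simp only [hfbar]; rw [if_pos i.2]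
    _ < (a i : ℕ∞) := hf i
  · exact basic_open ⟨bot, ⟨fbar, hmono⟩, ⟨0, fun n => by simp [hbot]⟩, ⟨m, by simp [hfbar]⟩, rfl⟩
  · constructor
    · intro n; exact zero_le
    · intro n
      simp only [hfbar]
      split
      · exact le_rfl
      · exact le_top

lemma cIdeal_compl_isOpen (m : ℕ) (a : Fin m → ℕ) : IsOpen (cIdeal m a)ᶜ := by
  rw [isOpen_iff_forall_mem_open]
  intro f hf
  simp only [cIdeal, Set.mem_compl_iff, Set.mem_setOf_eq, not_forall, not_lt] at hf
  obtain ⟨i, hi⟩ := hf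
  set flow : NNhat := fun k => min (f.1 k) (a i : ℕ∞) with hflow
  have hmono : Monotone flow := fun _ _ h => min_le_min (f.2 h) le_rfl
  set top : HomNN := ⟨fun _ => ⊤, monotone_const⟩ with htop
  refine ⟨{g : HomNN | ⟨flow, hmono⟩ ≤ g ∧ g ≤ top}, ?_, ?_, ?_⟩
  · intro g hg
    simp only [cIdeal, Set.mem_compl_iff, Set.mem_setOf_eq, not_forall, not_lt]
    refine ⟨i, ?_⟩
    calc (a i : ℕ∞) = min (f.1 (i:ℕ)) (a i : ℕ∞) := (min_eq_right hi).symm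
    _ ≤ g.1 (i : ℕ) := hg.1 (i : ℕ)
  · exact basic_open ⟨⟨flow, hmono⟩, top, ⟨a i, fun n => min_le_right _ _⟩,
      ⟨0, rfl⟩, rfl⟩
  · exact ⟨fun n => min_le_left _ _, fun n => le_top⟩

lemma cIdeal_isLowerSet (m : ℕ) (a : Fin m → ℕ) : IsLowerSet (cIdeal m a) := by
  intro f g hgf hf i
  exact lt_of_le_of_lt (hgf (i : ℕ)) (hf i)


section GammaTwo
variable {m : ℕ} {a : Fin m → ℕ}

lemma Gmap_eq_card {f : NNhat} {r : ℕ} (hr : ∀ i, f i ≠ ⊤ ↔ i < r) (j : ℕ) :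
    Gmap f j = ((Finset.range r).filter fun i => f i = (j : ℕ∞)).card := by
  have hset : {i : ℕ | f i = (j : ℕ∞)} =
      ↑((Finset.range r).filter fun i => f i = (j : ℕ∞)) := by
    ext i
    simp only [Set.mem_setOf_eq, Finset.coe_filter, Finset.mem_range]
    constructor
    · intro h
      refine ⟨(hr i).1 ?_, h⟩
      rw [h]
      exact (ENat.coe_lt_top j).ne
    · exact fun h => h.2
  calc Gmap f j = Nat.card {i : ℕ | f i = (j : ℕ∞)} := rfl
    _ = _ := by rw [hset, Nat.card_coe_set_eq, Set.ncard_coe_finset]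

lemma Psum_Gmap {f : NNhat} {r : ℕ} (hr : ∀ i, f i ≠ ⊤ ↔ i < r) (t : ℕ) :
    Psum (Gmap f) t = ((Finset.range r).filter fun i => f i < (t : ℕ∞)).card := by
  rw [Finset.card_eq_sum_card_fiberwise (f := fun i => (f i).toNat) (t := Finset.range t)
    (fun i hi => by
      simp only [Finset.mem_coe, Finset.mem_filter, Finset.mem_range] at hi ⊢
      obtain ⟨hir, hit⟩ := hi
      have hne : f i ≠ ⊤ := (hr i).2 hir
      have h2 : ((f i).toNat : ℕ∞) < (t : ℕ∞) := by rw [ENat.coe_toNat hne]; exact hit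
      exact_mod_cast h2)]
  apply Finset.sum_congr rfl
  intro j hj
  rw [Gmap_eq_card hr, Finset.filter_filter]
  congr 1
  apply Finset.filter_congr
  intro i hi
  simp only [Finset.mem_range] at hj hi
  have hne : f i ≠ ⊤ := (hr i).2 hi
  constructor
  · intro h
    refine ⟨by rw [h]; exact_mod_cast hj, by rw [h]; simp⟩
  · intro h
    rw [← ENat.coe_toNat hne, h.2]

lemma Gmap_supp {f : NNhat} {r : ℕ} (hr : ∀ i, f i ≠ ⊤ ↔ i < r) (j : ℕ)
    (hj : ((Finset.range r).sup fun i => (f i).toNat) < j) : Gmap f j = 0 := by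
  rw [Gmap_eq_card hr, Finset.card_eq_zero, Finset.filter_eq_empty_iff]
  intro i hi
  intro h
  have hne : f i ≠ ⊤ := by rw [h]; exact (ENat.coe_lt_top j).ne
  have h1 : (f i).toNat = j := by rw [h]; simp
  have h2 : (f i).toNat ≤ (Finset.range r).sup fun i' => (f i').toNat :=
    Finset.le_sup (f := fun i' => (f i').toNat) hi
  omega

lemma gamma_sub (hpos : ∀ i, 1 ≤ a i) {f : HomNN}
    (hf : ∀ i : Fin m, f.1 (i : ℕ) < (a i : ℕ∞)) (hL : LargeMap f.1) :
    stGE (Gmap f.1) (ugen m a) := by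
  letI : DecidablePred fun n => f.1 n = ⊤ := Classical.decPred _
  have hr : ∀ i, f.1 i ≠ ⊤ ↔ i < Nat.find hL := by
    intro i
    constructor
    · intro h
      by_contra hc
      push_neg at hc
      exact h (top_le_iff.1 ((Nat.find_spec hL) ▸ f.2 hc))
    · exact fun h => Nat.find_min hL h
  set r := Nat.find hL with hrdef
  set N := max (Finset.univ.sup a) (((Finset.range r).sup fun i => (f.1 i).toNat) + 1) with hN
  apply stGE_of_dom (ugen m a) N (fun j hj => ugen_supp j (le_trans (le_max_left _ _) hj))
    _ (Gmap f.1) (fun j hj => Gmap_supp hr j (by omega)) ?_ rfl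
  intro t
  rw [Psum_ugen hpos, Psum_Gmap hr]
  apply Finset.card_le_card_of_injOn (fun i : Fin m => (i : ℕ))
  · intro i hi
    simp only [Finset.mem_coe, Finset.mem_filter, Finset.mem_univ, true_and] at hi
    simp only [Finset.mem_coe, Finset.mem_filter, Finset.mem_range]
    have h1 : f.1 (i : ℕ) < (a i : ℕ∞) := hf i
    have h2 : (a i : ℕ∞) ≤ (t : ℕ∞) := by exact_mod_cast hi
    exact ⟨(hr _).1 (ne_top_of_lt h1), h1.trans_le h2⟩
  · intro i _ j _ h
    exact Fin.val_injective h

lemma gamma_sup (hpos : ∀ i, 1 ≤ a i) (hmono : Monotone a) (hm : 0 < m)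
    {v : ℕ → ℕ} (hst : stGE v (ugen m a)) :
    ∃ f : HomNN, (∀ i : Fin m, f.1 (i : ℕ) < (a i : ℕ∞)) ∧ LargeMap f.1 ∧ v = Gmap f.1 := by
  have humon : ugen m a ∈ Mon := by
    apply Set.Finite.subset (Set.finite_Iio (Finset.univ.sup a))
    intro j hj
    simp only [Function.mem_support] at hj
    simp only [Set.mem_Iio]
    by_contra h
    exact hj (ugen_supp j (by omega))
  have hvmon : v ∈ Mon := mon_of_stGE hst humon
  obtain ⟨b, hb⟩ : BddAbove (Function.support v) := hvmon.bddAbove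
  set N := max (b + 1) (Finset.univ.sup a) with hNdef
  have hvN : ∀ j, N ≤ j → v j = 0 := by
    intro j hj
    by_contra h
    have := hb (Function.mem_support.2 h)
    omega
  have haN : ∀ i, a i ≤ N := fun i =>
    le_trans (Finset.le_sup (Finset.mem_univ i)) (le_max_right _ _)
  have hdom := dom_of_stGE hst
  set n := Psum v N with hn
  have hPle : ∀ t, Psum v t ≤ n := Psum_le_stab v N hvN
  have hmn : m ≤ n := by
    have := hdom N
    rw [Psum_ugen_full hpos haN] at this
    exact this
  -- the sorted sequence
  set bfun : ℕ → ℕ := fun i => sInf {t | i < Psum v (t + 1)} with hbfun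
  have hne : ∀ i, i < n → {t | i < Psum v (t + 1)}.Nonempty := by
    intro i hi
    refine ⟨N, ?_⟩
    simp only [Set.mem_setOf_eq]
    rw [Psum_stab v N hvN (N + 1) (by omega)]
    exact hi
  have hspec : ∀ i, i < n → i < Psum v (bfun i + 1) := fun i hi => Nat.sInf_mem (hne i hi)
  have hlb : ∀ i t, i < Psum v (t + 1) → bfun i ≤ t := fun i t h => Nat.sInf_le h
  have hlow : ∀ i, i < n → Psum v (bfun i) ≤ i := by
    intro i hi
    rcases Nat.eq_zero_or_pos (bfun i) with h | h
    · rw [h]; simp [Psum]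
    · have hda : bfun i - 1 < bfun i := by omega
      have hnm : bfun i - 1 ∉ {t | i < Psum v (t + 1)} :=
        Nat.notMem_of_lt_sInf hda
      simp only [Set.mem_setOf_eq, not_lt] at hnm
      have : bfun i - 1 + 1 = bfun i := by omega
      rwa [this] at hnm
  set F : NNhat := fun i => if i < n then ((bfun i : ℕ) : ℕ∞) else ⊤ with hF
  have hFmono : Monotone F := by
    intro i j hij
    simp only [hF]
    split <;> split
    · have hj' : j < n := by assumption
      have : bfun i ≤ bfun j := hlb i (bfun j) (lt_of_le_of_lt hij (hspec j hj'))
      exact_mod_cast this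
    · exact le_top
    · omega
    · exact le_rfl
  refine ⟨⟨F, hFmono⟩, ?_, ⟨n, by simp [hF]⟩, ?_⟩
  · intro i
    have hin : (i : ℕ) < n := lt_of_lt_of_le i.2 hmn
    have h1 : (i : ℕ) < Psum v (a i) := by
      have h2 := hdom (a i)
      have h3 := Psum_ugen_lb hpos hmono i
      omega
    have h4 : bfun (i : ℕ) ≤ a i - 1 := by
      apply hlb
      have : a i - 1 + 1 = a i := by have := hpos i; omega
      rw [this]
      exact h1
    simp only [hF, if_pos hin]
    have h5 : bfun (i : ℕ) < a i := by have := hpos i; omega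
    exact_mod_cast h5
  · funext j
    have hIco : {i : ℕ | F i = (j : ℕ∞)} = Set.Ico (Psum v j) (Psum v (j + 1)) := by
      ext i
      simp only [Set.mem_setOf_eq, Set.mem_Ico, hF]
      constructor
      · intro h
        split at h
        · have hin : i < n := by assumption
          have hbij : bfun i = j := by exact_mod_cast h
          exact ⟨hbij ▸ hlow i hin, hbij ▸ hspec i hin⟩
        · exact absurd h (by simp)
      · intro ⟨h1, h2⟩
        have hin : i < n := lt_of_lt_of_le h2 (hPle (j + 1))
        rw [if_pos hin]
        have hle : bfun i ≤ j := hlb i j h2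
        have hge : j ≤ bfun i := by
          by_contra hc
          push_neg at hc
          have := hspec i hin
          have : Psum v (bfun i + 1) ≤ Psum v j := Psum_mono v (by omega)
          omega
        have : bfun i = j := le_antisymm hle hge
        exact_mod_cast this
    calc v j = Psum v (j + 1) - Psum v j := by rw [Psum_succ]; omega
      _ = (Finset.Ico (Psum v j) (Psum v (j + 1))).card := (Nat.card_Ico _ _).symm
      _ = Nat.card (Set.Ico (Psum v j) (Psum v (j + 1))) := by
          rw [← Finset.coe_Ico, Nat.card_coe_set_eq, Set.ncard_coe_finset]
      _ = Nat.card {i : ℕ | F i = (j : ℕ∞)} := by rw [hIco]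
      _ = Gmap F j := rfl

end GammaTwo

section LambdaPart
variable {m : ℕ} {a : Fin m → ℕ}

lemma mono_bounded_stab (N : ℕ) : ∀ g : ℕ → ℕ, Monotone g → (∀ k, g k ≤ N) →
    ∃ K, ∀ k, K ≤ k → g k = g K := by
  induction N with
  | zero =>
    intro g _ hb
    exact ⟨0, fun k _ => by have := hb k; have := hb 0; omega⟩
  | succ N ih =>
    intro g hg hb
    by_cases h : ∃ k, g k = N + 1
    · obtain ⟨k0, hk0⟩ := h
      refine ⟨k0, fun k hk => ?_⟩
      have h1 := hg hk
      have h2 := hb k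
      omega
    · push_neg at h
      exact ih g hg (fun k => by have := hb k; have := h k; omega)

lemma Psum_Lmap {f : NNhat} (hf : ∀ n, f n ≠ ⊤) (hfm : Monotone f) (t : ℕ) :
    Psum (Lmap f) (t + 1) = (f t).toNat := by
  induction t with
  | zero => simp [Psum, Lmap]
  | succ k ih =>
    rw [Psum_succ, ih]
    have hle : (f k).toNat ≤ (f (k + 1)).toNat :=
      ENat.toNat_le_toNat (hfm (by omega)) (hf (k + 1))
    show (f k).toNat + ((f (k + 1)).toNat - (f k).toNat) = _
    omega

lemma lambda_sub (hpos : ∀ i, 1 ≤ a i) {f : HomNN} (i : Fin m)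
    (hi : (a i : ℕ∞) ≤ f.1 (i : ℕ)) (hS : SmallMap f.1) :
    stGE (Lmap f.1) (singleMon (i : ℕ) (a i)) := by
  obtain ⟨Nb, hNb⟩ := hS
  have hfin : ∀ n, f.1 n ≠ ⊤ := fun n =>
    ne_top_of_le_ne_top (ENat.coe_lt_top Nb).ne (hNb n)
  set g : ℕ → ℕ := fun k => (f.1 k).toNat with hg
  have hgm : Monotone g := fun s t h => ENat.toNat_le_toNat (f.2 h) (hfin t)
  have hgb : ∀ k, g k ≤ Nb := by
    intro k
    have := hNb k
    simpa using ENat.toNat_le_toNat this (ENat.coe_lt_top Nb).ne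
  obtain ⟨K, hK⟩ := mono_bounded_stab Nb g hgm hgb
  have hP : ∀ t, Psum (Lmap f.1) (t + 1) = g t := Psum_Lmap hfin f.2
  have hvsupp : ∀ j, K + 1 ≤ j → Lmap f.1 j = 0 := by
    intro j hj
    match j, hj with
    | k + 1, hj =>
      show g (k + 1) - g k = 0
      have h1 := hK (k + 1) (by omega)
      have h2 := hK k (by omega)
      omega
  have hai : a i ≤ g (i : ℕ) := by
    have := ENat.toNat_le_toNat hi (hfin (i : ℕ))
    simpa using this
  set N := max (K + 1) ((i : ℕ) + 1) with hNdef
  apply stGE_of_dom (singleMon (i : ℕ) (a i)) N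
    (fun j hj => by simp only [singleMon]; rw [if_neg (by omega)])
    _ (Lmap f.1) (fun j hj => hvsupp j (by omega)) ?_ rfl
  intro t
  rw [Psum_single]
  split
  · have ht : (i : ℕ) + 1 ≤ t := by omega
    calc a i ≤ g (i : ℕ) := hai
      _ = Psum (Lmap f.1) ((i : ℕ) + 1) := (hP (i : ℕ)).symm
      _ ≤ Psum (Lmap f.1) t := Psum_mono _ ht
  · exact Nat.zero_le _

lemma lambda_sup {v : ℕ → ℕ} (i : Fin m) (hst : stGE v (singleMon (i : ℕ) (a i))) :
    ∃ f : HomNN, (¬ ∀ i' : Fin m, f.1 (i' : ℕ) < (a i' : ℕ∞)) ∧ SmallMap f.1 ∧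
      v = Lmap f.1 := by
  have humon : singleMon (i : ℕ) (a i) ∈ Mon := by
    apply Set.Finite.subset (Set.finite_singleton (i : ℕ))
    intro j hj
    simp only [Function.mem_support, singleMon] at hj
    simp only [Set.mem_singleton_iff]
    by_contra h
    rw [if_neg h] at hj
    exact hj rfl
  have hvmon : v ∈ Mon := mon_of_stGE hst humon
  obtain ⟨b, hb⟩ : BddAbove (Function.support v) := hvmon.bddAbove
  have hvN : ∀ j, b + 1 ≤ j → v j = 0 := by
    intro j hj
    by_contra h
    have := hb (Function.mem_support.2 h)
    omega
  have hdom := dom_of_stGE hst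
  set F : NNhat := fun t => ((Psum v (t + 1) : ℕ) : ℕ∞) with hF
  have hFmono : Monotone F := by
    intro s t h
    simp only [hF]
    exact_mod_cast Psum_mono v (by omega)
  refine ⟨⟨F, hFmono⟩, ?_, ⟨Psum v (b + 1), fun t => ?_⟩, ?_⟩
  · push_neg
    refine ⟨i, ?_⟩
    have h1 := hdom ((i : ℕ) + 1)
    rw [Psum_single, if_pos (by omega)] at h1
    simp only [hF]
    exact_mod_cast h1
  · simp only [hF]
    exact_mod_cast Psum_le_stab v (b + 1) hvN (t + 1)
  · funext k
    match k with
    | 0 =>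
      show v 0 = (F 0).toNat
      simp [hF, Psum_succ, Psum]
    | k + 1 =>
      show v (k + 1) = (F (k + 1)).toNat - (F k).toNat
      simp only [hF, ENat.toNat_coe]
      rw [Psum_succ v (k + 1)]
      omega

end LambdaPart

/-- the dual of the principal strongly stable ideal
`⟨x_{a_1}⋯x_{a_m}⟩` (here `a i` is the paper's `a_{i+1}`, a weakly increasing
sequence of positive integers, and the variable `x_k` has Lean index `k - 1`)
is `⟨x_1^{a_1}, …, x_m^{a_m}⟩`. -/
theorem stmt8 (m : ℕ) (hm : 0 < m) (a : Fin m → ℕ) (hmono : Monotone a)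
    (hpos : ∀ i, 1 ≤ a i) :
    IsDualPair
      (sstSpan {fun j => Nat.card {i : Fin m // a i = j + 1}})
      (sstSpan {v | ∃ i : Fin m, v = singleMon (i : ℕ) (a i)}) := by
  refine ⟨cIdeal m a, cIdeal_isOpen m hm a, cIdeal_isLowerSet m a, ?_, ?_, ?_⟩
  · -- regular open
    have hclosed : IsClosed (cIdeal m a) := isOpen_compl_iff.1 (cIdeal_compl_isOpen m a)
    rw [hclosed.closure_eq, (cIdeal_isOpen m hm a).interior_eq]
  · -- Gamma
    have hgen : ({fun j => Nat.card {i : Fin m // a i = j + 1}} : Set (ℕ → ℕ)) = {ugen m a} := rfl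
    rw [hgen]
    ext v
    constructor
    · rintro ⟨f, hf, hL, rfl⟩
      exact ⟨ugen m a, rfl, gamma_sub hpos hf hL⟩
    · rintro ⟨u, rfl, hst⟩
      obtain ⟨f, hf, hL, hv⟩ := gamma_sup hpos hmono hm hst
      exact ⟨f, hf, hL, hv⟩
  · -- Lambda
    rw [(cIdeal_compl_isOpen m a).interior_eq]
    ext v
    constructor
    · rintro ⟨f, hf, hS, rfl⟩
      simp only [cIdeal, Set.mem_compl_iff, Set.mem_setOf_eq, not_forall, not_lt] at hf
      obtain ⟨i, hi⟩ := hf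
      exact ⟨singleMon (i : ℕ) (a i), ⟨i, rfl⟩, lambda_sub hpos i hi hS⟩
    · rintro ⟨u, ⟨i, rfl⟩, hst⟩
      obtain ⟨f, hf, hS, hv⟩ := lambda_sup i hst
      exact ⟨f, hf, hS, hv⟩
end
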